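/- arXiv:1203.3934 — 2 statements merged into one kernel-verified Lean document; each statement's English description precedes it below -/
import Mathlib

section
/- Let v = (1, p, q) and w = (1, p', q') be two ℤ-linearly independent vectors in ℤ³. Then Span_ℝ{v, w} ∩ ℤ³ = ℤv + ℤw if and only if gcd(p' - p, q' - q) = 1. -/
/-- For ℤ-linearly independent vectors v = (1,p,q), w = (1,p',q') in ℤ³,
the lattice points of the real span of {v,w} equal ℤv + ℤw if and only if
gcd(p' - p, q' - q) = 1. -/
theorem span_inter_lattice_eq_iff_gcd_eq_one
    (p q p' q' : ℤ)
    (v w : Fin 3 → ℤ) (hv : v = ![1, p, q]) (hw : w = ![1, p', q'])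
    (hindep : ∀ a b : ℤ, a • v + b • w = 0 → a = 0 ∧ b = 0) :
    {x : Fin 3 → ℤ |
        (fun i => (x i : ℝ)) ∈
          Submodule.span ℝ ({fun i => (v i : ℝ), fun i => (w i : ℝ)} : Set (Fin 3 → ℝ))}
      = {x : Fin 3 → ℤ | ∃ a b : ℤ, x = a • v + b • w}
    ↔ Int.gcd (p' - p) (q' - q) = 1 := by
  subst hv hw
  have hne : ¬ (p' - p = 0 ∧ q' - q = 0) := by
    rintro ⟨h1, h2⟩
    have hp : p' = p := by omega
    have hq : q' = q := by omega
    have := hindep 1 (-1) (by subst hp hq; funext i; fin_cases i <;> simp)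
    omega
  constructor
  · intro hset
    have hdnz : Int.gcd (p' - p) (q' - q) ≠ 0 := fun h => hne (Int.gcd_eq_zero_iff.mp h)
    obtain ⟨u', hu'⟩ := (Int.gcd_dvd_left _ _ : ((Int.gcd (p' - p) (q' - q) : ℤ)) ∣ (p' - p))
    obtain ⟨t', ht'⟩ := (Int.gcd_dvd_right _ _ : ((Int.gcd (p' - p) (q' - q) : ℤ)) ∣ (q' - q))
    set d : ℤ := (Int.gcd (p' - p) (q' - q) : ℤ) with hd
    have hdZ : d ≠ 0 := Int.natCast_ne_zero.mpr hdnz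
    have hdR : (d : ℝ) ≠ 0 := Int.cast_ne_zero.mpr hdZ
    have hu'R : (p' : ℝ) - p = (d : ℝ) * u' := by exact_mod_cast hu'
    have ht'R : (q' : ℝ) - q = (d : ℝ) * t' := by exact_mod_cast ht'
    have hxmem : (![1, p + u', q + t'] : Fin 3 → ℤ) ∈
        {x : Fin 3 → ℤ |
          (fun i => (x i : ℝ)) ∈
            Submodule.span ℝ ({fun i => ((![1, p, q] : Fin 3 → ℤ) i : ℝ),
              fun i => ((![1, p', q'] : Fin 3 → ℤ) i : ℝ)} : Set (Fin 3 → ℝ))} := by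
      rw [Set.mem_setOf_eq, Submodule.mem_span_pair]
      refine ⟨1 - 1 / (d : ℝ), 1 / (d : ℝ), ?_⟩
      funext i
      fin_cases i
      · simp
      · simp
        field_simp
        linear_combination hu'R
      · simp
        field_simp
        linear_combination ht'R
    rw [Set.ext_iff] at hset
    obtain ⟨a, b, hab⟩ := (hset _).mp hxmem
    have e0 := congrFun hab 0
    have e1 := congrFun hab 1
    have e2 := congrFun hab 2
    simp at e0 e1 e2
    have hbu : b * (p' - p) = u' := by linear_combination p * e0 - e1
    have hbt : b * (q' - q) = t' := by linear_combination q * e0 - e2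
    have h1 : (b * d - 1) * u' = 0 := by linear_combination hbu - b * hu'
    have h2 : (b * d - 1) * t' = 0 := by linear_combination hbt - b * ht'
    have hbd : b * d = 1 := by
      rcases mul_eq_zero.mp h1 with h | h
      · linarith
      rcases mul_eq_zero.mp h2 with h' | h'
      · linarith
      exact absurd ⟨by rw [hu', h, mul_zero], by rw [ht', h', mul_zero]⟩ hne
    have hdnn : 0 ≤ d := Int.natCast_nonneg _
    have hd1 : d = 1 := by
      rcases Int.isUnit_iff.mp (IsUnit.of_mul_eq_one (a := d) b (by linarith [hbd, mul_comm b d])) with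
        h | h
      · exact h
      · omega
    rw [hd] at hd1
    exact_mod_cast hd1
  · intro hgcd
    ext x
    simp only [Set.mem_setOf_eq]
    constructor
    · intro hx
      rw [Submodule.mem_span_pair] at hx
      obtain ⟨α, β, hαβ⟩ := hx
      have h0 := congrFun hαβ 0
      have h1 := congrFun hαβ 1
      have h2 := congrFun hαβ 2
      simp at h0 h1 h2
      have hdet : (x 1 - x 0 * p) * (q' - q) = (x 2 - x 0 * q) * (p' - p) := by
        have hR : ((x 1 : ℝ) - (x 0 : ℝ) * p) * ((q' : ℝ) - q)
            = ((x 2 : ℝ) - (x 0 : ℝ) * q) * ((p' : ℝ) - p) := by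
          linear_combination ((p : ℝ) * ((q' : ℝ) - q) - (q : ℝ) * ((p' : ℝ) - p)) * h0
            - ((q' : ℝ) - q) * h1 + ((p' : ℝ) - p) * h2
        exact_mod_cast hR
      obtain ⟨m, n, hmn⟩ := Int.isCoprime_iff_gcd_eq_one.mpr hgcd
      refine ⟨x 0 - (m * (x 1 - x 0 * p) + n * (x 2 - x 0 * q)),
        m * (x 1 - x 0 * p) + n * (x 2 - x 0 * q), ?_⟩
      funext i
      fin_cases i
      · simp
      · simp
        linear_combination (x 0 * p - x 1) * hmn + n * hdet
      · simp
        linear_combination (x 0 * q - x 2) * hmn - m * hdet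
    · rintro ⟨a, b, rfl⟩
      rw [Submodule.mem_span_pair]
      exact ⟨a, b, by funext i; fin_cases i <;> simp⟩
end

section
/- Let N > 0, θ, θ₀ ∈ ℝ, and let κ, f : I → ℝ be differentiable with (κ', f') never zero. Set h(t) = e^{i(θ-θ₀)} e^{N(κ(t) + i f(t))}. Then the argument of d/dt[e^{Nκ(t) + i(Nf(t)+θ)}] is identically θ₀ (mod π) if and only if Im(h(t)) is constant on I. -/
open Complex Real

lemma slc_arg_aux (θ₀ : ℝ) (z : ℂ) (hz : z ≠ 0) :
    (∃ k : ℤ, z.arg = θ₀ + k * π) ↔ (z * Complex.exp (((-θ₀ : ℝ) : ℂ) * Complex.I)).im = 0 := by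
  conv_rhs => rw [← Complex.norm_mul_exp_arg_mul_I z]
  rw [mul_assoc, ← Complex.exp_add]
  have : (↑z.arg * Complex.I + ((-θ₀ : ℝ) : ℂ) * Complex.I)
      = ((z.arg - θ₀ : ℝ) : ℂ) * Complex.I := by push_cast; ring
  rw [this, Complex.im_ofReal_mul, Complex.exp_ofReal_mul_I_im]
  have habs : (‖z‖ : ℝ) ≠ 0 := by simpa using hz
  rw [mul_eq_zero, or_iff_right habs, Real.sin_eq_zero_iff]
  constructor
  · rintro ⟨k, hk⟩; exact ⟨k, by rw [hk]; ring⟩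
  · rintro ⟨k, hk⟩; exact ⟨k, by linarith⟩

/-- Special Lagrangian criterion: for N > 0 and differentiable κ, f with
(κ', f') never zero, the argument of d/dt[e^{Nκ(t)+i(Nf(t)+θ)}] is identically
θ₀ (mod π) if and only if Im(e^{i(θ-θ₀)} e^{N(κ(t)+if(t))}) is constant. -/
theorem special_lagrangian_condition
    (N θv θ₀ : ℝ) (hN : 0 < N)
    (κ f κ' f' : ℝ → ℝ)
    (hκ : ∀ t, HasDerivAt κ (κ' t) t) (hf : ∀ t, HasDerivAt f (f' t) t)
    (hnz : ∀ t, (κ' t, f' t) ≠ (0, 0)) :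
    (∀ t : ℝ, ∃ k : ℤ,
        (deriv (fun s : ℝ =>
          Complex.exp ((N * κ s : ℝ) + Complex.I * ((N * f s + θv : ℝ)))) t).arg
        = θ₀ + k * π)
    ↔ ∃ C : ℝ, ∀ t : ℝ,
        (Complex.exp (Complex.I * ((θv - θ₀ : ℝ)))
          * Complex.exp ((N : ℂ) * ((κ t : ℝ) + Complex.I * (f t : ℝ)))).im = C := by
  -- the function inside the deriv
  set u : ℝ → ℂ := fun s : ℝ =>
    Complex.exp ((N * κ s : ℝ) + Complex.I * ((N * f s + θv : ℝ))) with hu_def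
  have hu : ∀ t, HasDerivAt u
      (u t * (((N * κ' t : ℝ) : ℂ) + Complex.I * ((N * f' t : ℝ) : ℂ))) t := by
    intro t
    have h1 : HasDerivAt (fun s : ℝ => (((N * κ s : ℝ) : ℂ) + Complex.I * ((N * f s + θv : ℝ) : ℂ)))
        (((N * κ' t : ℝ) : ℂ) + Complex.I * ((N * f' t : ℝ) : ℂ)) t := by
      have a := ((hκ t).const_mul N).ofReal_comp
      have b := ((((hf t).const_mul N).add_const θv)).ofReal_comp
      exact a.add (b.const_mul Complex.I)
    exact h1.cexp
  -- the function on the right-hand side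
  set h : ℝ → ℂ := fun t : ℝ =>
    Complex.exp (Complex.I * ((θv - θ₀ : ℝ)))
      * Complex.exp ((N : ℂ) * ((κ t : ℝ) + Complex.I * (f t : ℝ))) with hh_def
  set E : ℝ → ℂ := fun t : ℝ =>
    Complex.exp (Complex.I * ((θv - θ₀ : ℝ)))
      * (Complex.exp ((N : ℂ) * ((κ t : ℝ) + Complex.I * (f t : ℝ)))
        * ((N : ℂ) * (((κ' t : ℝ) : ℂ) + Complex.I * ((f' t : ℝ) : ℂ)))) with hE_def
  have hh : ∀ t, HasDerivAt h (E t) t := by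
    intro t
    have hv : HasDerivAt (fun s : ℝ => (N : ℂ) * (((κ s : ℝ) : ℂ) + Complex.I * ((f s : ℝ) : ℂ)))
        ((N : ℂ) * (((κ' t : ℝ) : ℂ) + Complex.I * ((f' t : ℝ) : ℂ))) t :=
      ((hκ t).ofReal_comp.add (((hf t).ofReal_comp).const_mul Complex.I)).const_mul (N : ℂ)
    exact hv.cexp.const_mul _
  -- key algebraic identity
  have hkey : ∀ t, deriv u t * Complex.exp (((-θ₀ : ℝ) : ℂ) * Complex.I) = E t := by
    intro t
    rw [(hu t).deriv]
    simp only [hE_def, hu_def]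
    rw [mul_comm (Complex.exp _) ((((N * κ' t : ℝ) : ℂ) + Complex.I * ((N * f' t : ℝ) : ℂ))),
      mul_assoc, ← Complex.exp_add]
    rw [show (((N * κ t : ℝ) : ℂ) + Complex.I * ((N * f t + θv : ℝ) : ℂ) + ((-θ₀ : ℝ) : ℂ) * Complex.I)
        = Complex.I * ((θv - θ₀ : ℝ)) + (N : ℂ) * (((κ t : ℝ)) + Complex.I * ((f t : ℝ))) by
      push_cast; ring]
    rw [Complex.exp_add]
    push_cast
    ring
  have hune : ∀ t, deriv u t ≠ 0 := by
    intro t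
    rw [(hu t).deriv]
    apply mul_ne_zero (Complex.exp_ne_zero _)
    intro hc
    have h1 : N * κ' t = 0 := by have := congrArg Complex.re hc; simpa using this
    have h2 : N * f' t = 0 := by have := congrArg Complex.im hc; simpa using this
    have hκ0 : κ' t = 0 := by
      rcases mul_eq_zero.mp h1 with hh | hh
      · exact absurd hh hN.ne'
      · exact hh
    have hf0 : f' t = 0 := by
      rcases mul_eq_zero.mp h2 with hh | hh
      · exact absurd hh hN.ne'
      · exact hh
    exact hnz t (by rw [hκ0, hf0])
  have hiff : ∀ t, (∃ k : ℤ, (deriv u t).arg = θ₀ + k * π) ↔ (E t).im = 0 := by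
    intro t
    rw [slc_arg_aux θ₀ _ (hune t), hkey t]
  constructor
  · intro H
    refine ⟨(h 0).im, fun t => ?_⟩
    have hderiv0 : ∀ s, (E s).im = 0 := fun s => (hiff s).mp (H s)
    have him : ∀ s, HasDerivAt (fun r => (h r).im) ((E s).im) s := fun s =>
      (Complex.imCLM.hasFDerivAt (x := h s)).comp_hasDerivAt s (hh s)
    exact is_const_of_deriv_eq_zero (𝕜 := ℝ) (fun x => (him x).differentiableAt)
      (fun x => by rw [(him x).deriv]; exact hderiv0 x) t 0
  · rintro ⟨C, hC⟩ t
    rw [hiff t]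
    have him : HasDerivAt (fun r => (h r).im) ((E t).im) t :=
      (Complex.imCLM.hasFDerivAt (x := h t)).comp_hasDerivAt t (hh t)
    have hconst : (fun r : ℝ => (h r).im) = fun _ => C := funext hC
    rw [hconst] at him
    exact him.unique (hasDerivAt_const t C)
end
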